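/- arXiv:1507.03486 — 3 statements merged into one kernel-verified Lean document; each statement's English description precedes it below -/
import Mathlib

section
/- For any finite poset P with minimal element 0̂ and any elements p ≤ q in P, the Möbius function value μ_P(p,q) equals the reduced Euler characteristic of the order complex of the open interval (p,q), i.e. μ_P(p,q) = Σ_{ω chain in (p,q)} (−1)^{|ω|−1}, where the empty chain contributes −1 (equivalently, the sum over nonempty chains ω of (−1)^{|ω|−1} equals μ_P(p,q) when p < q). -/
/-!
A nonempty chain of the open interval `(p, q)` is its greatest element `r` added to a chain of
`(p, r)`. Hence `χ̃(p, q) = -∑_ω (-1)^|ω|`, the sum running over all chains of `(p, q)`, satisfies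
`χ̃(p, q) = -1 - ∑_{p<r<q} χ̃(p, r)`. Since `μ(p, p) = 1`, this is the defining recursion of
`μ(p, ·)`, so `μ(p, q) = χ̃(p, q)` by well-founded induction on `q`.
-/

open scoped Classical

open Finset

theorem Finset.exists_isGreatest_of_isChain {α : Type*} [Preorder α] {s : Finset α}
    (hne : s.Nonempty) (hc : IsChain (· ≤ ·) (s : Set α)) : ∃ m, IsGreatest (s : Set α) m := by
  obtain ⟨m, hm⟩ := s.exists_maximal hne
  exact ⟨m, hm.prop, fun x hx => (hc.total hx hm.prop).elim id (hm.le_of_ge hx)⟩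

section IntervalChains

variable {P : Type*} [PartialOrder P] [Fintype P]

noncomputable def intervalChains (p q : P) : Finset (Finset P) :=
  univ.filter fun ω => IsChain (· ≤ ·) (ω : Set P) ∧ ∀ a ∈ ω, p < a ∧ a < q

@[simp]
theorem mem_intervalChains {p q : P} {ω : Finset P} :
    ω ∈ intervalChains p q ↔ IsChain (· ≤ ·) (ω : Set P) ∧ ∀ a ∈ ω, p < a ∧ a < q := by
  simp [intervalChains]

theorem empty_mem_intervalChains (p q : P) : ∅ ∈ intervalChains p q := by
  simp [IsChain]

theorem sum_intervalChains {M : Type*} [AddCommMonoid M] (f : Finset P → M) (p q : P) :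
    ∑ ω ∈ intervalChains p q, f ω =
      f ∅ + ∑ ω ∈ (intervalChains p q).filter Finset.Nonempty, f ω := by
  simp_rw [Finset.nonempty_iff_ne_empty, Finset.filter_ne']
  exact (add_sum_erase _ f (empty_mem_intervalChains p q)).symm

theorem insert_mem_intervalChains {p r q : P} {σ : Finset P} (hσ : σ ∈ intervalChains p r)
    (hpr : p < r) (hrq : r < q) : insert r σ ∈ intervalChains p q := by
  rw [mem_intervalChains] at hσ ⊢
  refine ⟨?_, ?_⟩
  · rw [coe_insert]
    exact hσ.1.insert fun b hb _ => Or.inr (hσ.2 b hb).2.le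
  · simp only [mem_insert, forall_eq_or_imp]
    exact ⟨⟨hpr, hrq⟩, fun a ha => ⟨(hσ.2 a ha).1, (hσ.2 a ha).2.trans hrq⟩⟩

theorem isGreatest_insert_of_mem_intervalChains {p r : P} {σ : Finset P}
    (hσ : σ ∈ intervalChains p r) : IsGreatest (↑(insert r σ) : Set P) r := by
  refine ⟨mem_insert_self r σ, fun a ha => ?_⟩
  rcases mem_insert.mp ha with rfl | ha
  · exact le_rfl
  · exact ((mem_intervalChains.mp hσ).2 a ha).2.le

theorem notMem_of_mem_intervalChains {p r : P} {σ : Finset P}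
    (hσ : σ ∈ intervalChains p r) : r ∉ σ :=
  fun hr => lt_irrefl r ((mem_intervalChains.mp hσ).2 r hr).2

theorem sum_nonempty_intervalChains {M : Type*} [AddCommMonoid M] (f : Finset P → M) (p q : P) :
    ∑ ω ∈ (intervalChains p q).filter Finset.Nonempty, f ω =
      ∑ r ∈ univ.filter (fun r => p < r ∧ r < q), ∑ σ ∈ intervalChains p r, f (insert r σ) := by
  rw [sum_sigma']
  symm
  refine sum_bij (fun x _ => insert x.1 x.2) ?_ ?_ ?_ (fun _ _ => rfl)
  · rintro ⟨r, σ⟩ hrσ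
    simp only [mem_sigma, mem_filter, mem_univ, true_and] at hrσ
    exact mem_filter.mpr ⟨insert_mem_intervalChains hrσ.2 hrσ.1.1 hrσ.1.2, insert_nonempty r σ⟩
  · rintro ⟨r, σ⟩ hrσ ⟨r', σ'⟩ hrσ' h
    simp only [mem_sigma] at hrσ hrσ'
    have hr : r = r' := (isGreatest_insert_of_mem_intervalChains hrσ.2).unique
      (h ▸ isGreatest_insert_of_mem_intervalChains hrσ'.2)
    subst hr
    have hσ : σ = σ' := by
      rw [← erase_insert (notMem_of_mem_intervalChains hrσ.2), h,
        erase_insert (notMem_of_mem_intervalChains hrσ'.2)]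
    rw [hσ]
  · intro ω hω
    obtain ⟨hω, hne⟩ := mem_filter.mp hω
    obtain ⟨hc, hpq⟩ := mem_intervalChains.mp hω
    obtain ⟨m, hmω, hm⟩ := exists_isGreatest_of_isChain hne hc
    refine ⟨⟨m, ω.erase m⟩, ?_, insert_erase hmω⟩
    simp only [mem_sigma, mem_filter, mem_univ, true_and, mem_intervalChains]
    refine ⟨hpq m hmω, hc.mono (coe_subset.mpr (erase_subset m ω)), fun a ha => ?_⟩
    have ha' := mem_of_mem_erase ha
    exact ⟨(hpq a ha').1, (hm ha').lt_of_ne (ne_of_mem_erase ha)⟩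

theorem sum_filter_Icc_eq_add_add_sum_filter_Ioo {M : Type*} [AddCommMonoid M] (f : P → M)
    {p q : P} (hpq : p < q) :
    ∑ r ∈ univ.filter (fun r => p ≤ r ∧ r ≤ q), f r =
      f p + f q + ∑ r ∈ univ.filter (fun r => p < r ∧ r < q), f r := by
  have hIcc : univ.filter (fun r => p ≤ r ∧ r ≤ q) =
      insert p (insert q (univ.filter (fun r => p < r ∧ r < q))) := by
    ext r
    simp only [mem_filter, mem_univ, true_and, mem_insert]
    grind [le_iff_lt_or_eq, lt_irrefl, hpq.le]
  rw [hIcc, sum_insert (by simp [hpq.ne]), sum_insert (by simp), add_assoc]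

/-- Summing `(-1) ^ |ω|` over all chains, the empty one included, avoids the truncated
exponent `|ω| - 1`. -/
noncomputable def reducedEulerChar (p q : P) : ℤ :=
  -∑ ω ∈ intervalChains p q, (-1) ^ ω.card

theorem reducedEulerChar_eq_sum_nonempty (p q : P) :
    reducedEulerChar p q =
      (∑ ω ∈ univ.filter (fun ω : Finset P =>
          ω.Nonempty ∧ IsChain (· ≤ ·) (ω : Set P) ∧ ∀ a ∈ ω, p < a ∧ a < q),
        (-1 : ℤ) ^ (ω.card - 1)) - 1 := by
  have hfilter : (intervalChains p q).filter Finset.Nonempty = univ.filter (fun ω : Finset P =>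
      ω.Nonempty ∧ IsChain (· ≤ ·) (ω : Set P) ∧ ∀ a ∈ ω, p < a ∧ a < q) := by
    ext ω
    simp only [mem_filter, mem_intervalChains, mem_univ, true_and, and_comm]
  have hpow : ∀ ω ∈ (intervalChains p q).filter Finset.Nonempty,
      (-1 : ℤ) ^ ω.card = -(-1) ^ (ω.card - 1) := by
    intro ω hω
    rw [← Nat.sub_one_add_one (mem_filter.mp hω).2.card_pos.ne', pow_succ, Nat.add_sub_cancel]
    ring
  rw [reducedEulerChar, sum_intervalChains, sum_congr rfl hpow, sum_neg_distrib, hfilter,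
    card_empty, pow_zero]
  ring

theorem reducedEulerChar_eq_neg_one_sub_sum (p q : P) :
    reducedEulerChar p q =
      -1 - ∑ r ∈ univ.filter (fun r => p < r ∧ r < q), reducedEulerChar p r := by
  have hinsert : ∀ r : P,
      ∑ σ ∈ intervalChains p r, (-1 : ℤ) ^ (insert r σ).card = reducedEulerChar p r := by
    intro r
    rw [reducedEulerChar, ← sum_neg_distrib]
    refine sum_congr rfl fun σ hσ => ?_
    rw [card_insert_of_notMem (notMem_of_mem_intervalChains hσ), pow_succ]
    ring
  rw [reducedEulerChar, sum_intervalChains, sum_nonempty_intervalChains]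
  simp only [hinsert, card_empty, pow_zero]
  ring

end IntervalChains

theorem mobius_eq_reduced_euler_char_general
    {P : Type*} [PartialOrder P] [Fintype P]
    (mu : P → P → ℤ)
    (hmu_refl : ∀ p : P, mu p p = 1)
    (hmu_rec : ∀ p q : P, p < q →
      ∑ r ∈ Finset.univ.filter (fun r : P => p ≤ r ∧ r ≤ q), mu p r = 0)
    (p q : P) (hpq : p < q) :
    mu p q =
      (∑ ω ∈ Finset.univ.filter
          (fun ω : Finset P =>
            ω.Nonempty ∧ IsChain (· ≤ ·) (↑ω : Set P) ∧ ∀ a ∈ ω, p < a ∧ a < q),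
        (-1 : ℤ) ^ (ω.card - 1)) - 1 := by
  suffices h : ∀ q, p < q → mu p q = reducedEulerChar p q by
    rw [h q hpq, reducedEulerChar_eq_sum_nonempty]
  intro q
  induction q using WellFoundedLT.induction with
  | ind q ih =>
    intro hpq
    have hmu := hmu_rec p q hpq
    rw [sum_filter_Icc_eq_add_add_sum_filter_Ioo _ hpq, hmu_refl] at hmu
    have hsum : ∑ r ∈ univ.filter (fun r => p < r ∧ r < q), mu p r =
        ∑ r ∈ univ.filter (fun r => p < r ∧ r < q), reducedEulerChar p r :=
      sum_congr rfl fun r hr => ih r (mem_filter.mp hr).2.2 (mem_filter.mp hr).2.1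
    rw [reducedEulerChar_eq_neg_one_sub_sum]
    linarith

/-- **Möbius function equals reduced Euler characteristic of the order complex.**
For a finite poset `P` with minimal element `bot` and elements `p < q`, the Möbius
function value `mu p q` equals the reduced Euler characteristic of the complex of
chains in the open interval `(p, q)`: the sum over nonempty chains `ω` of
`(-1)^(|ω| - 1)`, with the empty chain contributing `-1`. -/
theorem mobius_eq_reduced_euler_char
    {P : Type*} [PartialOrder P] [Fintype P]
    (bot : P) (hbot : ∀ p : P, bot ≤ p)
    (mu : P → P → ℤ)
    (hmu_refl : ∀ p : P, mu p p = 1)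
    (hmu_rec : ∀ p q : P, p < q →
      ∑ r ∈ Finset.univ.filter (fun r : P => p ≤ r ∧ r ≤ q), mu p r = 0)
    (p q : P) (hpq : p < q) :
    mu p q =
      (∑ ω ∈ Finset.univ.filter
          (fun ω : Finset P =>
            ω.Nonempty ∧ IsChain (· ≤ ·) (↑ω : Set P) ∧ ∀ a ∈ ω, p < a ∧ a < q),
        (-1 : ℤ) ^ (ω.card - 1)) - 1 :=
  mobius_eq_reduced_euler_char_general mu hmu_refl hmu_rec p q hpq
end

section
/- Let G be a finite group with a representation ρ on V, and let H be a stabilizer subgroup (i.e. V_H ≠ ∅). If H' is another stabilizer subgroup with H ⊆ H' and V^H = V^{H'}, and if H is normal in G, then H' is normal in G. -/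
variable {k V G : Type*} [Field k] [AddCommGroup V] [Module k V]
  [FiniteDimensional k V] [Group G] [Fintype G]
  [DistribMulAction G V] [SMulCommClass G k V]

/-- The set of vectors fixed by every element of a subgroup `H`. -/
def fixedSet (G : Type*) [Group G] [MulAction G V] (H : Subgroup G) : Set V :=
  {v : V | ∀ h ∈ H, h • v = v}

/-- Let `G` be a finite group with a faithful linear representation on `V`, and let
`H` be a stabilizer subgroup (i.e. `V_H ≠ ∅`, that is, some vector has stabilizer
exactly `H`).  If `H'` is another stabilizer subgroup with `H ⊆ H'` and
`V^H = V^{H'}`, and if `H` is normal in `G`, then `H'` is normal in `G`. -/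
theorem normal_of_stabilizer_subgroup_same_fixed_space
    [FaithfulSMul G V]
    (H H' : Subgroup G)
    (hH : ∃ v : V, MulAction.stabilizer G v = H)
    (hH' : ∃ v : V, MulAction.stabilizer G v = H')
    (hle : H ≤ H')
    (hfix : fixedSet (V := V) G H = fixedSet (V := V) G H')
    (hnorm : H.Normal) :
    H'.Normal := by
  obtain ⟨v, hv⟩ := hH'
  constructor
  intro n hn g
  -- v is fixed by H', hence in fixedSet H' = fixedSet H
  have hvH' : v ∈ fixedSet (V := V) G H' := by
    intro h hh
    rw [← hv] at hh
    exact hh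
  -- g⁻¹ • v ∈ fixedSet H since H is normal
  have hgv : (g⁻¹ • v : V) ∈ fixedSet (V := V) G H := by
    intro h hh
    have : g * h * g⁻¹ ∈ H := hnorm.conj_mem h hh g
    have h1 : (g * h * g⁻¹) • v = v := by
      rw [hfix] at *
      exact hvH' _ (hle this)
    calc h • g⁻¹ • v = g⁻¹ • (g * h * g⁻¹) • v := by
          simp [mul_smul]
      _ = g⁻¹ • v := by rw [h1]
  rw [hfix] at hgv
  have : n • (g⁻¹ • v) = g⁻¹ • v := hgv n (by rw [← hv] at hn ⊢; exact hn)
  rw [← hv]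
  show (g * n * g⁻¹) • v = v
  calc (g * n * g⁻¹) • v = g • n • g⁻¹ • v := by simp [mul_smul]
    _ = v := by rw [this]; simp
end

section
/- Let W ≤ GL(V) be a finite group generated by reflections on a finite-dimensional vector space V over a field k with char k ∤ |W|, and let N be a normal subgroup of W that is a stabilizer subgroup (i.e. there exists v ∈ V with Stab_W(v) = N). Then the quotient group W/N acts faithfully on the fixed subspace V^N and is generated by elements acting as reflections on V^N; i.e. W/N is a reflection group on V^N. -/
variable {k V : Type*} [Field k] [AddCommGroup V] [Module k V] [FiniteDimensional k V]

/-- `g` is a reflection of `V`: an automorphism of finite order fixing pointwise a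
hyperplane (codimension-one subspace) of `V`. -/
def IsLinearReflection (k : Type*) [Field k] [AddCommGroup V] [Module k V]
    (g : V ≃ₗ[k] V) : Prop :=
  IsOfFinOrder g ∧
    ∃ H : Submodule k V, (∀ v ∈ H, g v = v) ∧
      Module.finrank k H + 1 = Module.finrank k V

/-- The submodule of vectors fixed by every element of a subgroup `N ≤ GL(V)`. -/
def fixedSubmoduleOf (N : Subgroup (V ≃ₗ[k] V)) : Submodule k V where
  carrier := {v : V | ∀ n ∈ N, n v = v}
  add_mem' := fun {a b} ha hb n hn => by rw [map_add, ha n hn, hb n hn]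
  zero_mem' := fun n _ => map_zero n
  smul_mem' := fun c v hv n hn => by rw [map_smul, hv n hn]

/-- `g` restricts to a reflection of the subspace `U`: `g` has finite order, maps
`U` into itself, and fixes pointwise a codimension-one subspace of `U`. -/
def IsReflectionOn (U : Submodule k V) (g : V ≃ₗ[k] V) : Prop :=
  IsOfFinOrder g ∧ (∀ v ∈ U, g v ∈ U) ∧
    ∃ H : Submodule k V, H ≤ U ∧ (∀ v ∈ H, g v = v) ∧
      Module.finrank k H + 1 = Module.finrank k U

omit [FiniteDimensional k V] in
private lemma mulApply (f g : V ≃ₗ[k] V) (x : V) : (f * g) x = f (g x) := rfl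

/-- Let `W ≤ GL(V)` be a finite reflection group (with `char k ∤ |W|`) and `N` a
normal subgroup of `W` which is a stabilizer subgroup, i.e. `N = Stab_W(v)` for some
`v`.  Then `W/N` acts faithfully on the fixed subspace `V^N` and is generated by
elements acting as reflections on `V^N`; i.e. `W/N` is a reflection group on `V^N`.
(Faithfulness: any `w ∈ W` acting trivially on `V^N` lies in `N`; generation: `W` is
generated by `N` together with elements of `W` acting as reflections on `V^N`.) -/
theorem quotient_by_normal_stabilizer_is_reflection_group
    (W N : Subgroup (V ≃ₗ[k] V))
    (hWfin : Finite W)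
    (hchar : (Nat.card W : k) ≠ 0)
    (hWrefl : W = Subgroup.closure {g : V ≃ₗ[k] V | g ∈ W ∧ IsLinearReflection k g})
    (hNW : N ≤ W)
    (hNnormal : ∀ w ∈ W, ∀ n ∈ N, w * n * w⁻¹ ∈ N)
    (hNstab : ∃ v : V, ∀ g ∈ W, (g v = v ↔ g ∈ N)) :
    (∀ g ∈ W, (∀ v ∈ fixedSubmoduleOf N, g v = v) → g ∈ N) ∧
    W = Subgroup.closure
      ((N : Set (V ≃ₗ[k] V)) ∪
        {g : V ≃ₗ[k] V | g ∈ W ∧ IsReflectionOn (fixedSubmoduleOf N) g}) := by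
  obtain ⟨v, hv⟩ := hNstab
  set U : Submodule k V := fixedSubmoduleOf N with hU
  -- the stabilized vector lies in the fixed subspace
  have hvU : v ∈ U := fun n hn => (hv n (hNW hn)).2 hn
  -- faithfulness
  have faithful : ∀ g ∈ W, (∀ x ∈ U, g x = x) → g ∈ N := by
    intro g hg hfix
    exact (hv g hg).1 (hfix v hvU)
  -- U is W-invariant (uses normality of N)
  have hinv : ∀ g ∈ W, ∀ x ∈ U, g x ∈ U := by
    intro g hg x hx n hn
    have h1 : g⁻¹ * n * (g⁻¹)⁻¹ ∈ N := hNnormal g⁻¹ (inv_mem hg) n hn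
    have h2 : (g⁻¹ * n * (g⁻¹)⁻¹) x = x := hx _ h1
    have h3 : (g⁻¹ * n * g) x = x := by rwa [inv_inv] at h2
    have h4 : g ((g⁻¹ * n * g) x) = n (g x) := by
      show g ((g⁻¹ * (n * g)) x) = n (g x)
      rw [mulApply, mulApply]
      exact g.apply_symm_apply _
    rw [← h4, h3]
  refine ⟨faithful, le_antisymm ?_ ?_⟩
  · -- W ≤ closure (N ∪ R)
    conv_lhs => rw [hWrefl]
    rw [Subgroup.closure_le]
    intro g hg
    obtain ⟨hgW, hford, H, hHfix, hHrank⟩ := hg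
    apply Subgroup.subset_closure
    by_cases hUH : U ≤ H
    · -- g fixes U pointwise, so g ∈ N
      left
      exact faithful g hgW (fun x hx => hHfix x (hUH hx))
    · -- g is a reflection on U
      right
      refine ⟨hgW, hford, hinv g hgW, H ⊓ U, inf_le_right,
        fun x hx => hHfix x hx.1, ?_⟩
      have hlt : H < H ⊔ U := left_lt_sup.2 hUH
      have h1 : Module.finrank k H < Module.finrank k (H ⊔ U : Submodule k V) :=
        Submodule.finrank_lt_finrank_of_lt hlt
      have h2 : Module.finrank k (H ⊔ U : Submodule k V) ≤ Module.finrank k V :=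
        Submodule.finrank_le _
      have h3 := Submodule.finrank_sup_add_finrank_inf_eq H U
      omega
  · -- closure (N ∪ R) ≤ W
    rw [Subgroup.closure_le]
    rintro g (hg | ⟨hgW, _⟩)
    · exact hNW hg
    · exact hgW
end
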